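/- Let H be a well-formed navigation history, let d be a fully active document of H, let d' be fresh (d' ∉ D), and let H' be the result of navigating from d to d' using the PATCHED definition: first delete the entire joint session future of H (remove each such document together with all its →-descendants), then replace d by d'. Then H' is a well-formed navigation history. -/

import Mathlib

structure NavData (α : Type) where
  D : Set α
  A : Set α
  child : α → α → Prop
  le : α → α → Prop
  sim : α → α → Prop

namespace NavData

variable {α : Type}

/-- All the navigation history axioms: finiteness, A ⊆ D, the child relation is a
forest on D, ≤ is a total order on D, ∼ is an equivalence on D, every document has a
unique active ∼-representative, same-session documents share parents, parents precede
children chronologically. -/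
def IsNavHist (H : NavData α) : Prop :=
  H.D.Finite ∧
  H.A ⊆ H.D ∧
  (∀ d e, H.child d e → d ∈ H.D ∧ e ∈ H.D) ∧
  (∀ d, ¬ Relation.TransGen H.child d d) ∧
  (∀ p q e, H.child p e → H.child q e → p = q) ∧
  (∀ d ∈ H.D, H.le d d) ∧
  (∀ d e f, H.le d e → H.le e f → H.le d f) ∧
  (∀ d e, H.le d e → H.le e d → d = e) ∧
  (∀ d e, H.le d e → d ∈ H.D ∧ e ∈ H.D) ∧
  (∀ d ∈ H.D, ∀ e ∈ H.D, H.le d e ∨ H.le e d) ∧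
  (∀ d ∈ H.D, H.sim d d) ∧
  (∀ d e, H.sim d e → H.sim e d) ∧
  (∀ d e f, H.sim d e → H.sim e f → H.sim d f) ∧
  (∀ d e, H.sim d e → d ∈ H.D ∧ e ∈ H.D) ∧
  (∀ d ∈ H.D, ∃! d', d' ∈ H.A ∧ H.sim d d') ∧
  (∀ d e e', H.child d e → H.sim e e' → H.child d e') ∧
  (∀ d e, H.child d e → H.le d e)

/-- Strict chronological order `d < e`. -/
def lt (H : NavData α) (d e : α) : Prop := H.le d e ∧ d ≠ e

/-- `d ≲ e` : same session and strictly earlier. -/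
def before (H : NavData α) (d e : α) : Prop := H.sim d e ∧ H.lt d e

/-- The joint session future: documents strictly later than some active same-session doc. -/
def JSF (H : NavData α) : Set α := { e | ∃ d ∈ H.A, H.before d e }

/-- Traversing the history to `d`: replace A by { e ∈ A | ¬(d ∼ e) } ∪ {d}. -/
def traverseTo (H : NavData α) (d : α) : NavData α :=
  { H with A := { e | (e ∈ H.A ∧ ¬ H.sim d e) ∨ e = d } }

def WellFormed (H : NavData α) : Prop :=
  ∀ a b c d, H.before a b → H.before c d → a ∈ H.A → d ∈ H.A → H.le d b

/-- The forward target: the ≤-least element of the joint session future. -/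
def IsForwardTarget (H : NavData α) (f : α) : Prop :=
  f ∈ H.JSF ∧ ∀ e ∈ H.JSF, H.le f e

def CanGoBack (H : NavData α) (d : α) : Prop := ∃ c, H.before c d

/-- The back target: the ≤-largest active document that can go back. -/
def IsBackTarget (H : NavData α) (b : α) : Prop :=
  b ∈ H.A ∧ H.CanGoBack b ∧ ∀ d ∈ H.A, H.CanGoBack d → H.le d b

/-- `d` is the ≤-largest document with `d ≲ d'`. -/
def IsBackStepTarget (H : NavData α) (d' d : α) : Prop :=
  H.before d d' ∧ ∀ e, H.before e d' → H.le e d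

/-- Traversing the history from `d'`: traversing to the ≤-largest `d` with `d ≲ d'`. -/
def TraverseFrom (H : NavData α) (d' : α) (H' : NavData α) : Prop :=
  ∃ d, H.IsBackStepTarget d' d ∧ H' = H.traverseTo d

/-- `ds` lists the first entries of the joint session future, in increasing order. -/
def FirstOfJSF (H : NavData α) (ds : List α) : Prop :=
  ds.Chain' H.lt ∧ (∀ d ∈ ds, d ∈ H.JSF) ∧
  ∀ e ∈ H.JSF, e ∉ ds → ∀ d ∈ ds, H.lt d e

/-- Patched traversal by +n: traverse successively to each of the first n entries of the
joint session future. -/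
def TraverseByPlus (H : NavData α) (n : ℕ) (H' : NavData α) : Prop :=
  ∃ ds : List α, ds.length = n ∧ H.FirstOfJSF ds ∧ H' = ds.foldl traverseTo H

/-- Patched traversal by −n: traverse successively from each successive back target. -/
inductive TraverseByMinus : NavData α → ℕ → NavData α → Prop
  | zero (H : NavData α) : TraverseByMinus H 0 H
  | succ {H H₁ H' : NavData α} {b : α} {n : ℕ} :
      H.IsBackTarget b → H.TraverseFrom b H₁ → TraverseByMinus H₁ n H' →
      TraverseByMinus H (n + 1) H'

/-- Traversal by an integer delta. -/
def TraverseBy (H : NavData α) (δ : ℤ) (H' : NavData α) : Prop :=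
  if 0 ≤ δ then H.TraverseByPlus δ.toNat H' else TraverseByMinus H (-δ).toNat H'

/-- The active-child relation `d ↠ e`. -/
def activeChild (H : NavData α) (d e : α) : Prop := H.child d e ∧ e ∈ H.A

def IsActiveRoot (H : NavData α) (d : α) : Prop :=
  d ∈ H.A ∧ ∀ e, ¬ H.child e d

/-- Fully active: reachable from an active root by active children. -/
def FullyActive (H : NavData α) (d : α) : Prop :=
  ∃ d₀, H.IsActiveRoot d₀ ∧ Relation.ReflTransGen H.activeChild d₀ d

/-- Restrict a navigation history away from a set `R` of documents. -/
def restrictAway (H : NavData α) (R : Set α) : NavData α where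
  D := H.D \ R
  A := H.A \ R
  child e f := H.child e f ∧ e ∉ R ∧ f ∉ R
  le e f := H.le e f ∧ e ∉ R ∧ f ∉ R
  sim e f := H.sim e f ∧ e ∉ R ∧ f ∉ R

/-- Deleting `d`: removing `d` together with all its →-descendants. -/
def deleteDoc (H : NavData α) (d : α) : NavData α :=
  H.restrictAway { e | Relation.ReflTransGen H.child d e }

/-- Replacing `d` by a fresh `d'`. -/
def replaceDoc (H : NavData α) (d d' : α) : NavData α where
  D := H.D ∪ {d'}
  A := (H.A \ {d}) ∪ {d'}
  child e f := H.child e f ∨ (H.child e d ∧ f = d')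
  le e f := H.le e f ∨ ((e ∈ H.D ∨ e = d') ∧ f = d')
  sim e f := H.sim e f ∨ (e = d' ∧ f = d') ∨ (H.sim e d ∧ f = d') ∨ (H.sim d f ∧ e = d')

/-- Deleting the entire joint session future (each member with its descendants). -/
def deleteJSF (H : NavData α) : NavData α :=
  H.restrictAway { e | ∃ j ∈ H.JSF, Relation.ReflTransGen H.child j e }

/-- Patched navigation from `d` to `d'`: delete the joint session future, then
replace `d` by `d'`. -/
def navigateFrom (H : NavData α) (d d' : α) : NavData α :=
  (H.deleteJSF).replaceDoc d d'

/-- Unpatched traversal by +n: traverse directly to the n-th entry of the joint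
session future (a single traversal). -/
def UnpatchedTraverseByPlus (H : NavData α) (n : ℕ) (H' : NavData α) : Prop :=
  ∃ ds : List α, H.FirstOfJSF ds ∧ ds.length = n ∧
    ∃ d, ds.getLast? = some d ∧ H' = H.traverseTo d

end NavData

/-!
Deleting the joint session future together with its descendants removes a set that is closed
under passing from an active document to the other members of its session: an active document
is never in the joint session future, so if it is deleted it is a proper descendant, and its
parent is then a parent of its whole session. Hence the axioms survive, and afterwards the joint
session future is empty.

Replacing an active `d` by a fresh `d'` puts `d'` on top of the order and otherwise pulls
every relation back along the map `unreplace d d' : d' ↦ d`, which is a bijection between the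
new and the old active documents; so the axioms survive again. The only document that can now
lie in the joint session future is `d'`, the latest one, and well-formedness follows.
-/

namespace NavData

variable {α : Type} {H : NavData α}

namespace IsNavHist

variable {d e f p q : α}

theorem finite (hH : H.IsNavHist) : H.D.Finite := hH.1

theorem A_subset (hH : H.IsNavHist) : H.A ⊆ H.D := hH.2.1

theorem child_mem (hH : H.IsNavHist) (h : H.child d e) : d ∈ H.D ∧ e ∈ H.D :=
  hH.2.2.1 d e h

theorem not_transGen_child (hH : H.IsNavHist) (d : α) : ¬ Relation.TransGen H.child d d :=
  hH.2.2.2.1 d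

theorem parent_unique (hH : H.IsNavHist) (hp : H.child p e) (hq : H.child q e) : p = q :=
  hH.2.2.2.2.1 p q e hp hq

theorem le_refl (hH : H.IsNavHist) (hd : d ∈ H.D) : H.le d d := hH.2.2.2.2.2.1 d hd

theorem le_trans (hH : H.IsNavHist) (h₁ : H.le d e) (h₂ : H.le e f) : H.le d f :=
  hH.2.2.2.2.2.2.1 d e f h₁ h₂

theorem le_antisymm (hH : H.IsNavHist) (h₁ : H.le d e) (h₂ : H.le e d) : d = e :=
  hH.2.2.2.2.2.2.2.1 d e h₁ h₂

theorem le_mem (hH : H.IsNavHist) (h : H.le d e) : d ∈ H.D ∧ e ∈ H.D :=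
  hH.2.2.2.2.2.2.2.2.1 d e h

theorem le_total (hH : H.IsNavHist) (hd : d ∈ H.D) (he : e ∈ H.D) : H.le d e ∨ H.le e d :=
  hH.2.2.2.2.2.2.2.2.2.1 d hd e he

theorem sim_refl (hH : H.IsNavHist) (hd : d ∈ H.D) : H.sim d d :=
  hH.2.2.2.2.2.2.2.2.2.2.1 d hd

theorem sim_symm (hH : H.IsNavHist) (h : H.sim d e) : H.sim e d :=
  hH.2.2.2.2.2.2.2.2.2.2.2.1 d e h

theorem sim_trans (hH : H.IsNavHist) (h₁ : H.sim d e) (h₂ : H.sim e f) : H.sim d f :=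
  hH.2.2.2.2.2.2.2.2.2.2.2.2.1 d e f h₁ h₂

theorem sim_mem (hH : H.IsNavHist) (h : H.sim d e) : d ∈ H.D ∧ e ∈ H.D :=
  hH.2.2.2.2.2.2.2.2.2.2.2.2.2.1 d e h

theorem existsUnique_active_sim (hH : H.IsNavHist) (hd : d ∈ H.D) :
    ∃! a, a ∈ H.A ∧ H.sim d a :=
  hH.2.2.2.2.2.2.2.2.2.2.2.2.2.2.1 d hd

theorem child_of_sim (hH : H.IsNavHist) (h : H.child p e) (hs : H.sim e f) : H.child p f :=
  hH.2.2.2.2.2.2.2.2.2.2.2.2.2.2.2.1 p e f h hs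

theorem le_of_child (hH : H.IsNavHist) (h : H.child d e) : H.le d e :=
  hH.2.2.2.2.2.2.2.2.2.2.2.2.2.2.2.2 d e h

theorem eq_of_sim_of_mem_A (hH : H.IsNavHist) (hd : d ∈ H.A) (he : e ∈ H.A)
    (h : H.sim d e) : d = e :=
  (hH.existsUnique_active_sim (hH.A_subset hd)).unique ⟨hd, hH.sim_refl (hH.A_subset hd)⟩
    ⟨he, h⟩

end IsNavHist

theorem isNavHist_restrictAway (hH : H.IsNavHist) {R : Set α}
    (hR : ∀ a ∈ H.A, ∀ e, H.sim a e → a ∈ R → e ∈ R) :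
    (H.restrictAway R).IsNavHist := by
  refine ⟨hH.finite.subset Set.sdiff_subset, Set.sdiff_subset_sdiff_left hH.A_subset,
    fun e f h => ?_, fun e h => ?_, fun p q e h₁ h₂ => hH.parent_unique h₁.1 h₂.1,
    fun e he => ⟨hH.le_refl he.1, he.2, he.2⟩,
    fun e f g h₁ h₂ => ⟨hH.le_trans h₁.1 h₂.1, h₁.2.1, h₂.2.2⟩,
    fun e f h₁ h₂ => hH.le_antisymm h₁.1 h₂.1, fun e f h => ?_, fun e he f hf => ?_,
    fun e he => ⟨hH.sim_refl he.1, he.2, he.2⟩,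
    fun e f h => ⟨hH.sim_symm h.1, h.2.2, h.2.1⟩,
    fun e f g h₁ h₂ => ⟨hH.sim_trans h₁.1 h₂.1, h₁.2.1, h₂.2.2⟩, fun e f h => ?_,
    fun e he => ?_, fun p e f h hs => ⟨hH.child_of_sim h.1 hs.1, h.2.1, hs.2.2⟩,
    fun e f h => ⟨hH.le_of_child h.1, h.2⟩⟩
  · exact ⟨⟨(hH.child_mem h.1).1, h.2.1⟩, (hH.child_mem h.1).2, h.2.2⟩
  · exact hH.not_transGen_child e (Relation.TransGen.mono (fun _ _ h => h.1) _ _ h)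
  · exact ⟨⟨(hH.le_mem h.1).1, h.2.1⟩, (hH.le_mem h.1).2, h.2.2⟩
  · rcases hH.le_total he.1 hf.1 with h | h
    exacts [Or.inl ⟨h, he.2, hf.2⟩, Or.inr ⟨h, hf.2, he.2⟩]
  · exact ⟨⟨(hH.sim_mem h.1).1, h.2.1⟩, (hH.sim_mem h.1).2, h.2.2⟩
  · obtain ⟨a, ⟨ha, hea⟩, huniq⟩ := hH.existsUnique_active_sim he.1
    have haR : a ∉ R := fun haR => he.2 (hR a ha e (hH.sim_symm hea) haR)
    exact ⟨a, ⟨⟨ha, haR⟩, hea, he.2, haR⟩,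
      fun b ⟨hb, hsb⟩ => huniq b ⟨hb.1, hsb.1⟩⟩

def jsfDescendants (H : NavData α) : Set α :=
  { e | ∃ j ∈ H.JSF, Relation.ReflTransGen H.child j e }

theorem notMem_JSF_of_mem_A (hH : H.IsNavHist) {a : α} (ha : a ∈ H.A) : a ∉ H.JSF :=
  fun ⟨_, hb, hsim, _, hne⟩ => hne (hH.eq_of_sim_of_mem_A hb ha hsim)

theorem mem_jsfDescendants_of_sim (hH : H.IsNavHist) {a e : α} (ha : a ∈ H.A)
    (hae : H.sim a e) (haJ : a ∈ H.jsfDescendants) : e ∈ H.jsfDescendants := by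
  obtain ⟨j, hj, hja⟩ := haJ
  rcases hja.cases_tail with rfl | ⟨p, hjp, hpa⟩
  · exact absurd hj (notMem_JSF_of_mem_A hH ha)
  · exact ⟨j, hj, hjp.tail (hH.child_of_sim hpa hae)⟩

theorem isNavHist_deleteJSF (hH : H.IsNavHist) : H.deleteJSF.IsNavHist :=
  isNavHist_restrictAway hH fun _ ha _ hae => mem_jsfDescendants_of_sim hH ha hae

theorem JSF_deleteJSF (H : NavData α) : H.deleteJSF.JSF = ∅ :=
  Set.eq_empty_of_forall_notMem fun e ⟨a, ⟨ha, _⟩, ⟨hae, _, heR⟩, ⟨hle, _⟩, hne⟩ =>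
    heR ⟨e, ⟨a, ha, hae, hle, hne⟩, .refl⟩

theorem FullyActive.mem_A_of_reflTransGen_child (hH : H.IsNavHist) {d j : α}
    (hd : H.FullyActive d) (hj : Relation.ReflTransGen H.child j d) : j ∈ H.A := by
  obtain ⟨d₀, ⟨hd₀, hroot⟩, hpath⟩ := hd
  induction hpath generalizing j with
  | refl =>
    rcases hj.cases_tail with rfl | ⟨p, _, hp⟩
    exacts [hd₀, absurd hp (hroot p)]
  | tail _ hbc ih =>
    rcases hj.cases_tail with rfl | ⟨p, hjp, hpc⟩
    exacts [hbc.2, ih (hH.parent_unique hpc hbc.1 ▸ hjp)]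

theorem FullyActive.mem_A_deleteJSF (hH : H.IsNavHist) {d : α} (hd : H.FullyActive d) :
    d ∈ H.deleteJSF.A :=
  ⟨hd.mem_A_of_reflTransGen_child hH .refl, fun ⟨_, hj, hjd⟩ =>
    notMem_JSF_of_mem_A hH (hd.mem_A_of_reflTransGen_child hH hjd) hj⟩

section unreplace

variable [DecidableEq α] {d d' e f : α}

def unreplace (d d' x : α) : α := if x = d' then d else x

theorem unreplace_of_mem (hd' : d' ∉ H.D) (he : e ∈ H.D) : unreplace d d' e = e :=
  if_neg fun h : e = d' => hd' (h ▸ he)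

theorem mem_replaceDoc_D_iff (hdD : d ∈ H.D) :
    e ∈ (H.replaceDoc d d').D ↔ unreplace d d' e ∈ H.D := by
  unfold unreplace
  split_ifs with h <;> simp [replaceDoc, h, hdD]

theorem replaceDoc_child_iff (hH : H.IsNavHist) (hd' : d' ∉ H.D) :
    (H.replaceDoc d d').child e f ↔ H.child e (unreplace d d' f) := by
  have hc : ∀ x, ¬ H.child x d' := fun x hc => hd' (hH.child_mem hc).2
  unfold unreplace
  split_ifs with h <;> simp [replaceDoc, h, hc]

theorem replaceDoc_sim_iff (hH : H.IsNavHist) (hdD : d ∈ H.D) (hd' : d' ∉ H.D) :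
    (H.replaceDoc d d').sim e f ↔ H.sim (unreplace d d' e) (unreplace d d' f) := by
  have hl : ∀ x, ¬ H.sim d' x := fun x hs => hd' (hH.sim_mem hs).1
  have hr : ∀ x, ¬ H.sim x d' := fun x hs => hd' (hH.sim_mem hs).2
  unfold unreplace
  split_ifs with he hf hf <;> simp [replaceDoc, he, hf, hl, hr, hH.sim_refl hdD]

theorem bijOn_unreplace_A (hH : H.IsNavHist) (hdA : d ∈ H.A) (hd' : d' ∉ H.D) :
    Set.BijOn (unreplace d d') (H.replaceDoc d d').A H.A := by
  refine ⟨fun b hb => ?_, fun b₁ hb₁ b₂ hb₂ h => ?_, fun a ha => ?_⟩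
  · unfold unreplace
    split_ifs with h
    exacts [hdA, (hb.resolve_right h).1]
  · unfold unreplace at h
    split_ifs at h with h₁ h₂ h₂
    · rw [h₁, h₂]
    · exact absurd h.symm (hb₂.resolve_right h₂).2
    · exact absurd h (hb₁.resolve_right h₁).2
    · exact h
  · by_cases had : a = d
    · exact ⟨d', Or.inr rfl, by rw [had, unreplace, if_pos rfl]⟩
    · exact ⟨a, Or.inl ⟨ha, had⟩, unreplace_of_mem hd' (hH.A_subset ha)⟩

theorem child_unreplace_of_replaceDoc_child (hH : H.IsNavHist) (hd' : d' ∉ H.D)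
    (h : (H.replaceDoc d d').child e f) : H.child (unreplace d d' e) (unreplace d d' f) := by
  have h := (replaceDoc_child_iff hH hd').1 h
  rwa [unreplace_of_mem hd' (hH.child_mem h).1]

end unreplace

variable {d d' : α}

theorem isNavHist_replaceDoc (hH : H.IsNavHist) (hdA : d ∈ H.A) (hd' : d' ∉ H.D) :
    (H.replaceDoc d d').IsNavHist := by
  classical
  have hdD := hH.A_subset hdA
  have hmem {x : α} := mem_replaceDoc_D_iff (H := H) (d' := d') (e := x) hdD
  have hchild {x y : α} := replaceDoc_child_iff (d := d) (e := x) (f := y) hH hd'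
  have hsim {x y : α} := replaceDoc_sim_iff (e := x) (f := y) hH hdD hd'
  have hle : ∀ x, ¬ H.le d' x := fun x h => hd' (hH.le_mem h).1
  have hbij := bijOn_unreplace_A hH hdA hd'
  refine ⟨hH.finite.union (Set.finite_singleton d'),
    Set.union_subset_union_left _ (Set.sdiff_subset.trans hH.A_subset),
    fun e f h => ⟨Or.inl (hH.child_mem (hchild.1 h)).1, hmem.2 (hH.child_mem (hchild.1 h)).2⟩,
    fun e h => hH.not_transGen_child _ (Relation.TransGen.lift (unreplace d d')
      (fun _ _ => child_unreplace_of_replaceDoc_child hH hd') _ _ h),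
    fun p q e hp hq => hH.parent_unique (hchild.1 hp) (hchild.1 hq), ?_, ?_, ?_, ?_, ?_,
    fun e he => hsim.2 (hH.sim_refl (hmem.1 he)), fun e f h => hsim.2 (hH.sim_symm (hsim.1 h)),
    fun e f g h₁ h₂ => hsim.2 (hH.sim_trans (hsim.1 h₁) (hsim.1 h₂)),
    fun e f h => (hH.sim_mem (hsim.1 h)).imp hmem.2 hmem.2, fun e he => ?_,
    fun p e f h hs => hchild.2 (hH.child_of_sim (hchild.1 h) (hsim.1 hs)), fun p e h => ?_⟩
  · rintro e (he | rfl)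
    exacts [Or.inl (hH.le_refl he), Or.inr ⟨Or.inr rfl, rfl⟩]
  · rintro e f g (h₁ | ⟨he, rfl⟩) (h₂ | ⟨-, rfl⟩)
    exacts [Or.inl (hH.le_trans h₁ h₂), Or.inr ⟨Or.inl (hH.le_mem h₁).1, rfl⟩,
      absurd h₂ (hle g), Or.inr ⟨he, rfl⟩]
  · rintro e f (h₁ | ⟨-, rfl⟩) (h₂ | ⟨-, rfl⟩)
    exacts [hH.le_antisymm h₁ h₂, absurd h₁ (hle f), absurd h₂ (hle e), rfl]
  · rintro e f (h | ⟨he, rfl⟩)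
    exacts [⟨Or.inl (hH.le_mem h).1, Or.inl (hH.le_mem h).2⟩, ⟨he, Or.inr rfl⟩]
  · rintro e (he | rfl) f (hf | rfl)
    exacts [(hH.le_total he hf).imp Or.inl Or.inl, Or.inl (Or.inr ⟨Or.inl he, rfl⟩),
      Or.inr (Or.inr ⟨Or.inl hf, rfl⟩), Or.inl (Or.inr ⟨Or.inr rfl, rfl⟩)]
  · obtain ⟨a, ⟨ha, hea⟩, huniq⟩ := hH.existsUnique_active_sim (hmem.1 he)
    obtain ⟨b, hb, rfl⟩ := hbij.surjOn ha
    exact ⟨b, ⟨hb, hsim.2 hea⟩, fun c ⟨hc, hec⟩ =>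
      hbij.injOn hc hb (huniq _ ⟨hbij.mapsTo hc, hsim.1 hec⟩)⟩
  · by_cases he : e = d'
    · exact Or.inr ⟨Or.inl (hH.child_mem (hchild.1 h)).1, he⟩
    · exact Or.inl (hH.le_of_child (by simpa [unreplace, he] using hchild.1 h))

theorem JSF_replaceDoc_subset (hH : H.IsNavHist) (hd' : d' ∉ H.D) :
    (H.replaceDoc d d').JSF ⊆ insert d' H.JSF := by
  rintro b ⟨a, ha, hsim, hle, hne⟩
  by_cases hb : b = d'
  · exact Or.inl hb
  have hle : H.le a b := hle.resolve_right fun h => hb h.2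
  have ha' : a ≠ d' := fun h => hd' (h ▸ (hH.le_mem hle).1)
  have hsim : H.sim a b := by simpa [replaceDoc, ha', hb] using hsim
  exact Or.inr ⟨a, (ha.resolve_right ha').1, hsim, hle, hne⟩

theorem wellFormed_replaceDoc (hH : H.IsNavHist) (hd' : d' ∉ H.D) (hJ : H.JSF = ∅) :
    (H.replaceDoc d d').WellFormed := by
  intro a b c e hab _ ha he
  obtain rfl : b = d' := by simpa [hJ] using JSF_replaceDoc_subset hH hd' ⟨a, ha, hab⟩
  exact Or.inr ⟨he.imp (fun h => hH.A_subset h.1) id, rfl⟩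

end NavData

theorem stmt15_general {α : Type} (H : NavData α) (hH : H.IsNavHist)
    {d d' : α} (hd : H.FullyActive d) (hd' : d' ∉ H.D) :
    (H.navigateFrom d d').IsNavHist ∧ (H.navigateFrom d d').WellFormed := by
  have hdel := NavData.isNavHist_deleteJSF hH
  have hd'' : d' ∉ H.deleteJSF.D := fun h => hd' h.1
  exact ⟨NavData.isNavHist_replaceDoc hdel (hd.mem_A_deleteJSF hH) hd'',
    NavData.wellFormed_replaceDoc hdel hd'' H.JSF_deleteJSF⟩

theorem stmt15 {α : Type} (H : NavData α) (hH : H.IsNavHist)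
    (hwf : H.WellFormed) {d d' : α} (hd : H.FullyActive d) (hd' : d' ∉ H.D) :
    (H.navigateFrom d d').IsNavHist ∧ (H.navigateFrom d d').WellFormed :=
  stmt15_general H hH hd hd'
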